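/- arXiv:0901.4564 — 2 statements merged into one kernel-verified Lean document; each statement's English description precedes it below -/
import Mathlib

section
/- For every positive integer n, ν_2(T(2^n)) = J_{n−1}, where J denotes the Jacobsthal sequence. -/
open Nat Finset

/-- The ASM counting sequence `T(n) = ∏_{j=0}^{n-1} (3j+1)!/(n+j)!`. -/
def T (n : ℕ) : ℚ := ∏ j ∈ Finset.range n, ((3 * j + 1)! : ℚ) / ((n + j)! : ℚ)

/-- The Jacobsthal numbers: `J 0 = J 1 = 1`, `J (n+2) = J (n+1) + 2 * J n`. -/
def J : ℕ → ℕ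
  | 0 => 1
  | 1 => 1
  | (n + 2) => J (n + 1) + 2 * J n

/-- Sum of the base-`p` digits of `n`. -/
def S (p n : ℕ) : ℕ := (Nat.digits p n).sum

/-- The generalized sequence `T_p(n) = ∏_{j=0}^{n-1} (pj+1)!/(n+j)!`. -/
def Tp (p n : ℕ) : ℚ := ∏ j ∈ Finset.range n, ((p * j + 1)! : ℚ) / ((n + j)! : ℚ)

/- ### Auxiliary lemmas -/

lemma S2_two_mul (m : ℕ) : S 2 (2*m) = S 2 m := by
  rcases Nat.eq_zero_or_pos m with h|h
  · simp [h, S]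
  · rw [S, Nat.digits_def' (by norm_num) (by omega)]
    simp [Nat.mul_div_cancel_left, S, Nat.mul_mod_right]

lemma S2_two_mul_add_one (m : ℕ) : S 2 (2*m+1) = S 2 m + 1 := by
  rw [S, Nat.digits_def' (by norm_num) (by omega)]
  have h1 : (2*m+1) % 2 = 1 := by omega
  have h2 : (2*m+1) / 2 = m := by omega
  rw [h1, h2]; simp [S, Nat.add_comm]

lemma S2_le (n : ℕ) : S 2 n ≤ n := by
  induction n using Nat.strong_induction_on with
  | _ n ih =>
    rcases Nat.eq_zero_or_pos n with h|h
    · simp [h, S]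
    · rw [S, Nat.digits_def' (by norm_num) h]
      have := ih (n/2) (by omega)
      simp only [List.sum_cons]
      rw [show (Nat.digits 2 (n/2)).sum = S 2 (n/2) from rfl]
      omega

lemma S2_pow_add : ∀ n, ∀ j < 2^n, S 2 (2^n + j) = S 2 j + 1 := by
  intro n
  induction n with
  | zero =>
    intro j hj
    interval_cases j
    simp [S]
  | succ n ih =>
    intro j hj
    obtain ⟨k, hk | hk⟩ := Nat.even_or_odd' j
    · have hlt : k < 2^n := by rw [pow_succ] at hj; omega
      have h1 : 2^(n+1) + j = 2*(2^n + k) := by rw [pow_succ]; omega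
      rw [h1, S2_two_mul, ih k hlt, hk, S2_two_mul]
    · have hlt : k < 2^n := by rw [pow_succ] at hj; omega
      have h1 : 2^(n+1) + j = 2*(2^n + k) + 1 := by rw [pow_succ]; omega
      rw [h1, S2_two_mul_add_one, ih k hlt, hk, S2_two_mul_add_one]

lemma sum_even_odd (f : ℕ → ℕ) (m : ℕ) :
    ∑ j ∈ range (2*m), f j = ∑ k ∈ range m, (f (2*k) + f (2*k+1)) := by
  induction m with
  | zero => simp
  | succ m ih =>
    have h : 2 * (m+1) = (2*m) + 1 + 1 := by ring
    rw [h, sum_range_succ, sum_range_succ, ih, sum_range_succ]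
    ring

/-- `A n = ∑_{j<2^n} S₂(3j+1)`. -/
def Abc (n : ℕ) : ℕ := ∑ j ∈ range (2^n), S 2 (3*j+1)
/-- `B n = ∑_{j<2^n} S₂(3j)`. -/
def Bbc (n : ℕ) : ℕ := ∑ j ∈ range (2^n), S 2 (3*j)
/-- `C n = ∑_{j<2^n} S₂(3j+2)`. -/
def Cbc (n : ℕ) : ℕ := ∑ j ∈ range (2^n), S 2 (3*j+2)

lemma A_succ (n : ℕ) : Abc (n+1) = 2^n + Bbc n + Cbc n := by
  have h : (2:ℕ)^(n+1) = 2*2^n := by rw [pow_succ]; ring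
  rw [Abc, h, sum_even_odd]
  have : ∀ k : ℕ, S 2 (3*(2*k)+1) + S 2 (3*(2*k+1)+1) = (S 2 (3*k) + 1) + S 2 (3*k+2) := by
    intro k
    have h1 : 3*(2*k)+1 = 2*(3*k)+1 := by ring
    have h2 : 3*(2*k+1)+1 = 2*(3*k+2) := by ring
    rw [h1, h2, S2_two_mul_add_one, S2_two_mul]
  rw [Finset.sum_congr rfl fun k _ => this k]
  simp [Finset.sum_add_distrib, Bbc, Cbc]
  omega

lemma B_succ (n : ℕ) : Bbc (n+1) = Bbc n + Abc n + 2^n := by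
  have h : (2:ℕ)^(n+1) = 2*2^n := by rw [pow_succ]; ring
  rw [Bbc, h, sum_even_odd]
  have : ∀ k : ℕ, S 2 (3*(2*k)) + S 2 (3*(2*k+1)) = S 2 (3*k) + (S 2 (3*k+1) + 1) := by
    intro k
    have h1 : 3*(2*k) = 2*(3*k) := by ring
    have h2 : 3*(2*k+1) = 2*(3*k+1)+1 := by ring
    rw [h1, h2, S2_two_mul_add_one, S2_two_mul]
  rw [Finset.sum_congr rfl fun k _ => this k]
  simp [Finset.sum_add_distrib, Bbc, Abc]
  omega

lemma C_succ (n : ℕ) : Cbc (n+1) = Abc n + Cbc n + 2^n := by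
  have h : (2:ℕ)^(n+1) = 2*2^n := by rw [pow_succ]; ring
  rw [Cbc, h, sum_even_odd]
  have : ∀ k : ℕ, S 2 (3*(2*k)+2) + S 2 (3*(2*k+1)+2) = S 2 (3*k+1) + (S 2 (3*k+2) + 1) := by
    intro k
    have h1 : 3*(2*k)+2 = 2*(3*k+1) := by ring
    have h2 : 3*(2*k+1)+2 = 2*(3*k+2)+1 := by ring
    rw [h1, h2, S2_two_mul_add_one, S2_two_mul]
  rw [Finset.sum_congr rfl fun k _ => this k]
  simp [Finset.sum_add_distrib, Cbc, Abc]
  omega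

lemma C_eq_B (n : ℕ) : Cbc n = Bbc n + 1 := by
  induction n with
  | zero => norm_num [Cbc, Bbc, S]
  | succ n ih => rw [C_succ, B_succ, ih]; omega

lemma A_rec (n : ℕ) : Abc (n+2) = Abc (n+1) + 2 * Abc n + 3 * 2^n := by
  have h1 : Abc (n+2) = 2^(n+1) + Bbc (n+1) + Cbc (n+1) := A_succ (n+1)
  have h2 := A_succ n
  have h3 := B_succ n
  have h4 := C_succ n
  have h5 := C_eq_B n
  have hp : (2:ℕ)^(n+1) = 2*2^n := by rw [pow_succ]; ring
  omega

lemma key (m : ℕ) : (Abc (m+1) : ℤ) + J m = 2^(m+1) + (m+1) * 2^m := by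
  induction m using Nat.twoStepInduction with
  | zero => norm_num [show Abc 1 = 2 by norm_num [Abc, S, Finset.sum_range_succ], show J 0 = 1 by rfl]
  | one => norm_num [show Abc 2 = 7 by norm_num [Abc, S, Finset.sum_range_succ], show J 1 = 1 by rfl]
  | more n ih1 ih2 =>
    have hrec : (Abc (n+1+2) : ℤ) = Abc (n+2) + 2 * Abc (n+1) + 3 * 2^(n+1) := by
      exact_mod_cast congrArg (Nat.cast (R := ℤ)) (A_rec (n+1))
    have hJ : (J (n+2) : ℤ) = J (n+1) + 2 * J n := by
      rw [show J (n+2) = J (n+1) + 2 * J n from rfl]; push_cast; ring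
    rw [show n+2+1 = n+1+2 from rfl, hrec, hJ]
    push_cast at ih1 ih2 ⊢
    linear_combination ih2 + 2 * ih1

lemma sumS (n : ℕ) : 2 * ∑ j ∈ range (2^n), S 2 j = n * 2^n := by
  induction n with
  | zero => simp [S]
  | succ n ih =>
    have h : (2:ℕ)^(n+1) = 2*2^n := by rw [pow_succ]; ring
    rw [h, sum_even_odd]
    have : ∀ k : ℕ, S 2 (2*k) + S 2 (2*k+1) = 2 * S 2 k + 1 := by
      intro k; rw [S2_two_mul, S2_two_mul_add_one]; ring
    rw [Finset.sum_congr rfl fun k _ => this k, Finset.sum_add_distrib,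
        Finset.sum_const, card_range, smul_eq_mul, mul_one, ← Finset.mul_sum]
    calc 2 * (2 * ∑ j ∈ range (2^n), S 2 j + 2^n)
        = 2 * (2 * ∑ j ∈ range (2^n), S 2 j) + 2 * 2^n := by ring
      _ = 2 * (n * 2^n) + 2 * 2^n := by rw [ih]
      _ = (n+1) * (2 * 2^n) := by ring

lemma padicValRat_prod (p : ℕ) [Fact p.Prime] (f : ℕ → ℚ) (n : ℕ) (hf : ∀ j, f j ≠ 0) :
    padicValRat p (∏ j ∈ range n, f j) = ∑ j ∈ range n, padicValRat p (f j) := by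
  induction n with
  | zero => simp [padicValRat.one]
  | succ n ih =>
    rw [prod_range_succ, sum_range_succ, ← ih,
      padicValRat.mul (Finset.prod_ne_zero_iff.mpr fun j _ => hf j) (hf n)]

lemma legendre2 (m : ℕ) : (padicValNat 2 (m !) : ℤ) = (m : ℤ) - S 2 m := by
  haveI : Fact (Nat.Prime 2) := ⟨Nat.prime_two⟩
  have h := sub_one_mul_padicValNat_factorial (p := 2) m
  have hs := S2_le m
  have h' : padicValNat 2 (m !) = m - S 2 m := by
    rw [show (Nat.digits 2 m).sum = S 2 m from rfl] at h
    omega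
  rw [h']
  omega

lemma sum_odds (N : ℕ) : ∑ j ∈ range N, (2*(j:ℤ)+1) = (N:ℤ)^2 := by
  induction N with
  | zero => simp
  | succ N ih => rw [sum_range_succ, ih]; push_cast; ring

theorem stmt8 (n : ℕ) (hn : 0 < n) :
    padicValRat 2 (T (2 ^ n)) = (J (n - 1) : ℤ) := by
  haveI : Fact (Nat.Prime 2) := ⟨Nat.prime_two⟩
  obtain ⟨m, rfl⟩ : ∃ m, n = m + 1 := ⟨n - 1, by omega⟩
  set N : ℕ := 2 ^ (m+1) with hN
  have hval : padicValRat 2 (T N) =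
      ∑ j ∈ range N, (((padicValNat 2 ((3*j+1)!) : ℤ)) - (padicValNat 2 ((N+j)!) : ℤ)) := by
    rw [T, padicValRat_prod 2 _ N (fun j => by
      apply div_ne_zero <;> exact_mod_cast Nat.factorial_ne_zero _)]
    refine Finset.sum_congr rfl fun j _ => ?_
    rw [padicValRat.div (by exact_mod_cast Nat.factorial_ne_zero _)
        (by exact_mod_cast Nat.factorial_ne_zero _), padicValRat.of_nat, padicValRat.of_nat]
  rw [hval]
  have hterm : ∀ j ∈ range N,
      ((padicValNat 2 ((3*j+1)!) : ℤ)) - (padicValNat 2 ((N+j)!) : ℤ)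
        = ((S 2 (N+j) : ℤ) - (S 2 (3*j+1) : ℤ)) + ((2*(j:ℤ)+1) - (N:ℤ)) := by
    intro j _
    rw [legendre2, legendre2]
    push_cast
    ring
  rw [Finset.sum_congr rfl hterm, Finset.sum_add_distrib, Finset.sum_sub_distrib,
      Finset.sum_sub_distrib, sum_odds, Finset.sum_const, card_range, nsmul_eq_mul]
  have hzero : ((N:ℤ)^2 - (N:ℤ)*(N:ℤ)) = 0 := by ring
  have hSN : ∑ j ∈ range N, (S 2 (N+j) : ℤ) = (N : ℤ) + ∑ j ∈ range N, (S 2 j : ℤ) := by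
    have : ∀ j ∈ range N, (S 2 (N+j) : ℤ) = (S 2 j : ℤ) + 1 := by
      intro j hj
      rw [mem_range] at hj
      exact_mod_cast congrArg (Nat.cast (R := ℤ)) (S2_pow_add (m+1) j hj)
    rw [Finset.sum_congr rfl this, Finset.sum_add_distrib, Finset.sum_const, card_range,
      nsmul_eq_mul, mul_one]
    ring
  have hA : ∑ j ∈ range N, (S 2 (3*j+1) : ℤ) = (Abc (m+1) : ℤ) := by
    rw [Abc]; push_cast; rfl
  have hsumS : 2 * ∑ j ∈ range N, (S 2 j : ℤ) = (m+1) * 2^(m+1) := by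
    exact_mod_cast congrArg (Nat.cast (R := ℤ)) (sumS (m+1))
  have hkey := key m
  rw [hSN, hA]
  have hNval : (N : ℤ) = 2^(m+1) := by rw [hN]; push_cast; ring
  rw [hNval] at hzero ⊢
  have h2 : (2:ℤ)^(m+1) = 2 * 2^m := by ring
  simp only [Nat.add_sub_cancel]
  rw [h2] at hkey hsumS ⊢
  linarith [hkey, hsumS]
end

section
/- For every positive integer n, T(J_n) is odd, i.e. ν_2(T(J_n)) = 0, where J_n is the n-th Jacobsthal number. -/
open Nat Finset

/-! Legendre's formula `(p - 1) v_p(m!) = m - s_p(m)` together with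
`∑_{j<N} (3j+1) = ∑_{j<N} (N+j)` turns `v_2(T N)` into the difference between the binary digit
sums of `N, …, 2N-1` and of `1, 4, …, 3N-2`. Splitting `[0, 2M)` by parity (`s(2m) = s(m)`,
`s(2m+1) = s(m) + 1`) expresses `A_r(M) = ∑_{i<M} s(3i+r)` (`r = 0, 1, 2`) and `∑_{j<M} s(j)` at
`2M` through their values at `M`. The odd-indexed Jacobsthal numbers are `N = (4^k - 1)/3`, which
triples to `4^k - 1`, so `s(3N) = 2 s(N)`; with this, the identities
`A_0 + s(N) = A_1 = A_2 = ∑_{j<N} s(j) + N` survive `N ↦ 4N + 1`, and they yield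
`A_1 = ∑_{j<M} s(j) + M` also at the even-indexed ones `M = 2N + 1`. That is the required equality
of the two digit sums, since `∑_{j<N} s(N+j) = ∑_{j<N} s(j) + N`. -/

theorem sum_range_three_mul_add_one (N : ℕ) :
    ∑ j ∈ range N, ((3 * j + 1 : ℕ) : ℤ) = ∑ j ∈ range N, ((N + j : ℕ) : ℤ) := by
  have gauss : (∑ j ∈ range N, (j : ℤ)) * 2 = N * N - N := by
    induction N with
    | zero => simp
    | succ N ih => rw [sum_range_succ]; push_cast; linear_combination ih
  push_cast
  simp only [sum_add_distrib, ← mul_sum, sum_const, card_range, nsmul_eq_mul]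
  linear_combination gauss

section Legendre

variable {p : ℕ} [Fact p.Prime]

theorem padicValRat_prod_s9 {ι : Type*} (s : Finset ι) {f : ι → ℚ} (hf : ∀ i ∈ s, f i ≠ 0) :
    padicValRat p (∏ i ∈ s, f i) = ∑ i ∈ s, padicValRat p (f i) := by
  classical
  induction s using Finset.induction_on with
  | empty => simp
  | insert a s ha ih =>
    rw [prod_insert ha, sum_insert ha, padicValRat.mul (hf a (mem_insert_self a s))
      (prod_ne_zero_iff.mpr fun i hi => hf i (mem_insert_of_mem hi)),
      ih fun i hi => hf i (mem_insert_of_mem hi)]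

theorem sub_one_mul_padicValRat_factorial (m : ℕ) :
    ((p : ℤ) - 1) * padicValRat p (m ! : ℚ) = m - S p m := by
  have h := sub_one_mul_padicValNat_factorial (p := p) m
  have hle : S p m ≤ m := digit_sum_le p m
  have hp : 1 ≤ p := (Fact.out : p.Prime).one_lt.le
  rw [padicValRat.of_nat, ← Nat.cast_one, ← Nat.cast_sub hp, ← Nat.cast_mul, h,
    ← S, Nat.cast_sub hle]

theorem sub_one_mul_padicValRat_T (N : ℕ) :
    ((p : ℤ) - 1) * padicValRat p (T N) =
      ∑ j ∈ range N, (S p (N + j) : ℤ) - ∑ j ∈ range N, (S p (3 * j + 1) : ℤ) := by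
  have hfac (m : ℕ) : (m ! : ℚ) ≠ 0 := cast_ne_zero.mpr (factorial_ne_zero m)
  rw [T, padicValRat_prod_s9 _ fun j _ => div_ne_zero (hfac _) (hfac _), mul_sum]
  simp only [padicValRat.div (hfac _) (hfac _), mul_sub, sub_one_mul_padicValRat_factorial,
    sum_sub_distrib, sum_range_three_mul_add_one]
  ring

end Legendre

theorem S_two_mul (n : ℕ) : S 2 (2 * n) = S 2 n := by
  rcases Nat.eq_zero_or_pos n with rfl | hn
  · rfl
  · simp [S, Nat.digits_def' one_lt_two (by omega : 0 < 2 * n)]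

theorem S_two_mul_add_one (n : ℕ) : S 2 (2 * n + 1) = S 2 n + 1 := by
  rw [S, S, Nat.digits_def' one_lt_two (by omega), show (2 * n + 1) % 2 = 1 by omega,
    show (2 * n + 1) / 2 = n by omega, List.sum_cons, Nat.add_comm]

theorem sum_range_two_mul {M : Type*} [AddCommMonoid M] (f : ℕ → M) (N : ℕ) :
    ∑ i ∈ range (2 * N), f i = ∑ i ∈ range N, (f (2 * i) + f (2 * i + 1)) := by
  induction N with
  | zero => simp
  | succ N ih =>
    rw [show 2 * (N + 1) = 2 * N + 1 + 1 by ring, sum_range_succ, sum_range_succ, ih,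
      sum_range_succ, add_assoc]

def binDigitSumBelow (N : ℕ) : ℕ := ∑ j ∈ range N, S 2 j

/-- `∑_{i<N} s₂(3i + r)`: the binary digit sums of the `m < 3N` with `m ≡ r (mod 3)`,
when `r < 3`. -/
def binDigitSumResidue (r N : ℕ) : ℕ := ∑ i ∈ range N, S 2 (3 * i + r)

theorem binDigitSumBelow_two_mul (N : ℕ) :
    binDigitSumBelow (2 * N) = 2 * binDigitSumBelow N + N := by
  simp only [binDigitSumBelow, sum_range_two_mul, S_two_mul, S_two_mul_add_one, sum_add_distrib,
    sum_const, card_range, smul_eq_mul, mul_one]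
  ring

theorem sum_range_S_two_add_self (N : ℕ) :
    ∑ j ∈ range N, S 2 (N + j) = binDigitSumBelow N + N := by
  have h := binDigitSumBelow_two_mul N
  rw [two_mul N, binDigitSumBelow, sum_range_add, ← binDigitSumBelow] at h
  omega

theorem binDigitSumResidue_succ (r N : ℕ) :
    binDigitSumResidue r (N + 1) = binDigitSumResidue r N + S 2 (3 * N + r) :=
  sum_range_succ _ _

theorem binDigitSumResidue_zero_two_mul (N : ℕ) :
    binDigitSumResidue 0 (2 * N) = binDigitSumResidue 0 N + binDigitSumResidue 1 N + N := by
  have h (i : ℕ) : S 2 (3 * (2 * i) + 0) + S 2 (3 * (2 * i + 1) + 0) =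
      S 2 (3 * i + 0) + S 2 (3 * i + 1) + 1 := by
    rw [show 3 * (2 * i) + 0 = 2 * (3 * i + 0) by ring,
      show 3 * (2 * i + 1) + 0 = 2 * (3 * i + 1) + 1 by ring, S_two_mul, S_two_mul_add_one,
      add_assoc]
  simp only [binDigitSumResidue, sum_range_two_mul, h, sum_add_distrib, sum_const, card_range,
    smul_eq_mul, mul_one]

theorem binDigitSumResidue_one_two_mul (N : ℕ) :
    binDigitSumResidue 1 (2 * N) = binDigitSumResidue 0 N + binDigitSumResidue 2 N + N := by
  have h (i : ℕ) : S 2 (3 * (2 * i) + 1) + S 2 (3 * (2 * i + 1) + 1) =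
      S 2 (3 * i + 0) + S 2 (3 * i + 2) + 1 := by
    rw [show 3 * (2 * i) + 1 = 2 * (3 * i + 0) + 1 by ring,
      show 3 * (2 * i + 1) + 1 = 2 * (3 * i + 2) by ring, S_two_mul, S_two_mul_add_one]
    ring
  simp only [binDigitSumResidue, sum_range_two_mul, h, sum_add_distrib, sum_const, card_range,
    smul_eq_mul, mul_one]

theorem binDigitSumResidue_two_two_mul (N : ℕ) :
    binDigitSumResidue 2 (2 * N) = binDigitSumResidue 1 N + binDigitSumResidue 2 N + N := by
  have h (i : ℕ) : S 2 (3 * (2 * i) + 2) + S 2 (3 * (2 * i + 1) + 2) =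
      S 2 (3 * i + 1) + S 2 (3 * i + 2) + 1 := by
    rw [show 3 * (2 * i) + 2 = 2 * (3 * i + 1) by ring,
      show 3 * (2 * i + 1) + 2 = 2 * (3 * i + 2) + 1 by ring, S_two_mul, S_two_mul_add_one,
      add_assoc]
  simp only [binDigitSumResidue, sum_range_two_mul, h, sum_add_distrib, sum_const, card_range,
    smul_eq_mul, mul_one]

def DigitSumBalanced (N : ℕ) : Prop :=
  binDigitSumResidue 0 N + S 2 N = binDigitSumBelow N + N ∧
    binDigitSumResidue 1 N = binDigitSumBelow N + N ∧
    binDigitSumResidue 2 N = binDigitSumBelow N + N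

theorem DigitSumBalanced.four_mul_add_one {N : ℕ} (h : DigitSumBalanced N)
    (h3 : S 2 (3 * N) = 2 * S 2 N) : DigitSumBalanced (4 * N + 1) := by
  obtain ⟨h0, h1, h2⟩ := h
  have e0 : S 2 (3 * (2 * (2 * N)) + 0) = S 2 (3 * N) := by
    rw [show 3 * (2 * (2 * N)) + 0 = 2 * (2 * (3 * N)) by ring, S_two_mul, S_two_mul]
  have e1 : S 2 (3 * (2 * (2 * N)) + 1) = S 2 (3 * N) + 1 := by
    rw [show 3 * (2 * (2 * N)) + 1 = 2 * (2 * (3 * N)) + 1 by ring, S_two_mul_add_one,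
      S_two_mul]
  have e2 : S 2 (3 * (2 * (2 * N)) + 2) = S 2 (3 * N) + 1 := by
    rw [show 3 * (2 * (2 * N)) + 2 = 2 * (2 * (3 * N) + 1) by ring, S_two_mul,
      S_two_mul_add_one]
  have a0 := binDigitSumResidue_zero_two_mul (2 * N)
  have a1 := binDigitSumResidue_one_two_mul (2 * N)
  have a2 := binDigitSumResidue_two_two_mul (2 * N)
  have b0 := binDigitSumResidue_zero_two_mul N
  have b1 := binDigitSumResidue_one_two_mul N
  have b2 := binDigitSumResidue_two_two_mul N
  have g1 := binDigitSumBelow_two_mul N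
  have g2 := binDigitSumBelow_two_mul (2 * N)
  have s4 : S 2 (2 * (2 * N)) = S 2 N := by rw [S_two_mul, S_two_mul]
  have s5 : S 2 (2 * (2 * N) + 1) = S 2 N + 1 := by rw [S_two_mul_add_one, S_two_mul]
  rw [show 4 * N + 1 = 2 * (2 * N) + 1 by ring, DigitSumBalanced, binDigitSumResidue_succ,
    binDigitSumResidue_succ, binDigitSumResidue_succ, binDigitSumBelow, sum_range_succ,
    ← binDigitSumBelow]
  omega

theorem DigitSumBalanced.binDigitSumResidue_one_two_mul_add_one {N : ℕ} (h : DigitSumBalanced N)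
    (h3 : S 2 (3 * N) = 2 * S 2 N) :
    binDigitSumResidue 1 (2 * N + 1) = binDigitSumBelow (2 * N + 1) + (2 * N + 1) := by
  obtain ⟨h0, -, h2⟩ := h
  have e1 : S 2 (3 * (2 * N) + 1) = S 2 (3 * N) + 1 := by
    rw [show 3 * (2 * N) + 1 = 2 * (3 * N) + 1 by ring, S_two_mul_add_one]
  have b1 := binDigitSumResidue_one_two_mul N
  have g1 := binDigitSumBelow_two_mul N
  rw [binDigitSumResidue_succ, binDigitSumBelow, sum_range_succ, ← binDigitSumBelow, S_two_mul]
  omega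

/-- `fourRepunit k = (4 ^ k - 1) / 3`, with binary expansion `1010…101`. -/
def fourRepunit : ℕ → ℕ
  | 0 => 0
  | k + 1 => 4 * fourRepunit k + 1

theorem S_two_fourRepunit (k : ℕ) : S 2 (fourRepunit k) = k := by
  induction k with
  | zero => rfl
  | succ k ih =>
    rw [fourRepunit, show 4 * fourRepunit k + 1 = 2 * (2 * fourRepunit k) + 1 by ring,
      S_two_mul_add_one, S_two_mul, ih]

theorem S_two_three_mul_fourRepunit (k : ℕ) :
    S 2 (3 * fourRepunit k) = 2 * S 2 (fourRepunit k) := by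
  rw [S_two_fourRepunit]
  induction k with
  | zero => rfl
  | succ k ih =>
    rw [fourRepunit, show 3 * (4 * fourRepunit k + 1) = 2 * (2 * (3 * fourRepunit k) + 1) + 1 by
      ring, S_two_mul_add_one, S_two_mul_add_one, ih]
    omega

theorem digitSumBalanced_fourRepunit (k : ℕ) : DigitSumBalanced (fourRepunit k) := by
  induction k with
  | zero => simp [DigitSumBalanced, fourRepunit, binDigitSumResidue, binDigitSumBelow, S]
  | succ k ih =>
    exact ih.four_mul_add_one (S_two_three_mul_fourRepunit k)

theorem J_two_mul_add_one_and_two_mul_add_two (k : ℕ) :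
    J (2 * k + 1) = fourRepunit (k + 1) ∧ J (2 * k + 2) = 2 * fourRepunit (k + 1) + 1 := by
  induction k with
  | zero => exact ⟨rfl, rfl⟩
  | succ k ih =>
    obtain ⟨hodd, heven⟩ := ih
    have hodd' : J (2 * k + 3) = fourRepunit (k + 2) := by
      rw [J, heven, hodd]
      simp only [fourRepunit]
      ring
    refine ⟨hodd', ?_⟩
    rw [show 2 * (k + 1) + 2 = 2 * k + 2 + 2 from rfl, J, hodd', heven, fourRepunit]
    ring

theorem binDigitSumResidue_one_J (n : ℕ) :
    binDigitSumResidue 1 (J n) = binDigitSumBelow (J n) + J n := by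
  obtain ⟨k, rfl | rfl⟩ := Nat.even_or_odd' n
  · rcases k with _ | k
    · rfl
    · rw [show 2 * (k + 1) = 2 * k + 2 from rfl, (J_two_mul_add_one_and_two_mul_add_two k).2]
      exact (digitSumBalanced_fourRepunit (k + 1)).binDigitSumResidue_one_two_mul_add_one
        (S_two_three_mul_fourRepunit (k + 1))
  · rw [(J_two_mul_add_one_and_two_mul_add_two k).1]
    exact (digitSumBalanced_fourRepunit (k + 1)).2.1

theorem stmt9_general (n : ℕ) :
    padicValRat 2 (T (J n)) = 0 := by
  have h := sub_one_mul_padicValRat_T (p := 2) (J n)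
  rw [← Nat.cast_sum, ← Nat.cast_sum, sum_range_S_two_add_self, ← binDigitSumResidue,
    binDigitSumResidue_one_J] at h
  simpa using h

theorem stmt9 (n : ℕ) (hn : 0 < n) :
    padicValRat 2 (T (J n)) = 0 :=
  stmt9_general n
end
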